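/- For every irrational x ∈ (0,1) and every integer n ≥ 0: p_n and q_n are both odd and gcd(p_n, q_n) = 1; moreover, for every n ≥ 1, p'_n + q'_n is odd and p''_n + q''_n is odd (i.e., p'_n/q'_n and p''_n/q''_n have numerator and denominator of opposite parity). -/

import Mathlib

/-- The odd-odd continued fraction map on `[0,1]`.  For `x ∈ [(k-1)/k, k/(k+1))` with `k ≥ 1`
one has `k = ⌊1/(1-x)⌋`, and the two branches are separated by `(2k-1)/(2k+1)`. -/
noncomputable def oocfT (x : ℝ) : ℝ :=
  if x = 1 then 1
  else if x < (2 * (⌊1 / (1 - x)⌋ : ℝ) - 1) / (2 * (⌊1 / (1 - x)⌋ : ℝ) + 1) then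
    ((⌊1 / (1 - x)⌋ : ℝ) * x - ((⌊1 / (1 - x)⌋ : ℝ) - 1)) /
      ((⌊1 / (1 - x)⌋ : ℝ) - ((⌊1 / (1 - x)⌋ : ℝ) + 1) * x)
  else
    ((⌊1 / (1 - x)⌋ : ℝ) - ((⌊1 / (1 - x)⌋ : ℝ) + 1) * x) /
      ((⌊1 / (1 - x)⌋ : ℝ) * x - ((⌊1 / (1 - x)⌋ : ℝ) - 1))

/-- OOCF partial quotient `a` of a point `y`: `a = k+1` if `y` is in the lower branch
interval `((k-1)/k, (2k-1)/(2k+1))`, and `a = k` if `y ∈ ((2k-1)/(2k+1), k/(k+1))`,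
where `k = ⌊1/(1-y)⌋`. -/
noncomputable def oocfA (y : ℝ) : ℤ :=
  if y < (2 * (⌊1 / (1 - y)⌋ : ℝ) - 1) / (2 * (⌊1 / (1 - y)⌋ : ℝ) + 1) then ⌊1 / (1 - y)⌋ + 1
  else ⌊1 / (1 - y)⌋

/-- OOCF partial quotient `ε` of a point `y`: `ε = -1` on the lower branch interval and
`ε = 1` on the upper one. -/
noncomputable def oocfE (y : ℝ) : ℤ :=
  if y < (2 * (⌊1 / (1 - y)⌋ : ℝ) - 1) / (2 * (⌊1 / (1 - y)⌋ : ℝ) + 1) then -1 else 1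

/-- The OOCF convergents `(p'_n, q'_n, p_n, q_n)` of `x`, defined by
`p'_0 = 1, q'_0 = 0, p_0 = 1, q_0 = 1` and
`p'_n = a_n p_{n-1} - p'_{n-1}`, `q'_n = a_n q_{n-1} - q'_{n-1}`,
`p_n = 2 p'_n + ε_n p_{n-1}`, `q_n = 2 q'_n + ε_n q_{n-1}`,
where `(a_n, ε_n)` are the partial quotients of `x`, i.e. `a_n = oocfA (oocfT^[n-1] x)`,
`ε_n = oocfE (oocfT^[n-1] x)`. -/
noncomputable def oocfConv (x : ℝ) : ℕ → ℤ × ℤ × ℤ × ℤ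
  | 0 => (1, 0, 1, 1)
  | n + 1 =>
    let c := oocfConv x n
    (oocfA (oocfT^[n] x) * c.2.2.1 - c.1,
     oocfA (oocfT^[n] x) * c.2.2.2 - c.2.1,
     2 * (oocfA (oocfT^[n] x) * c.2.2.1 - c.1) + oocfE (oocfT^[n] x) * c.2.2.1,
     2 * (oocfA (oocfT^[n] x) * c.2.2.2 - c.2.1) + oocfE (oocfT^[n] x) * c.2.2.2)

/-- `n`-th sub-convergent numerator `p'_n`. -/
noncomputable def oocfP' (x : ℝ) (n : ℕ) : ℤ := (oocfConv x n).1

/-- `n`-th sub-convergent denominator `q'_n`. -/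
noncomputable def oocfQ' (x : ℝ) (n : ℕ) : ℤ := (oocfConv x n).2.1

/-- `n`-th principal convergent numerator `p_n`. -/
noncomputable def oocfP (x : ℝ) (n : ℕ) : ℤ := (oocfConv x n).2.2.1

/-- `n`-th principal convergent denominator `q_n`. -/
noncomputable def oocfQ (x : ℝ) (n : ℕ) : ℤ := (oocfConv x n).2.2.2

/-- `n`-th pseudo-convergent numerator: `p''_n = p'_n + ε_n p_{n-1}` for `n ≥ 1`
(with the convention `p''_0 = 0`). -/
noncomputable def oocfP'' (x : ℝ) : ℕ → ℤ
  | 0 => 0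
  | n + 1 => oocfP' x (n + 1) + oocfE (oocfT^[n] x) * oocfP x n

/-- `n`-th pseudo-convergent denominator: `q''_n = q'_n + ε_n q_{n-1}` for `n ≥ 1`
(with the convention `q''_0 = 1`). -/
noncomputable def oocfQ'' (x : ℝ) : ℕ → ℤ
  | 0 => 1
  | n + 1 => oocfQ' x (n + 1) + oocfE (oocfT^[n] x) * oocfQ x n

/-! Since `ε_n = ±1` is odd, the recurrences show inductively that `p_n, q_n` are odd and that
`p'_n + q'_n = a_n (p_{n-1} + q_{n-1}) - (p'_{n-1} + q'_{n-1})` stays odd. The determinant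
`p_n q'_n - p'_n q_n` gets multiplied by `-ε_n` at each step, so it is a unit of `ℤ`, which makes
`p_n` and `q_n` coprime. -/

lemma oocfE_eq_neg_one_or_one (y : ℝ) : oocfE y = -1 ∨ oocfE y = 1 := by
  unfold oocfE
  split_ifs <;> simp

lemma isUnit_oocfE (y : ℝ) : IsUnit (oocfE y) :=
  Int.isUnit_iff.2 (oocfE_eq_neg_one_or_one y).symm

lemma odd_oocfE (y : ℝ) : Odd (oocfE y) := by
  rcases oocfE_eq_neg_one_or_one y with h | h <;> simp [h]

section Recurrences

variable (x : ℝ) (n : ℕ)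

lemma oocfP'_succ : oocfP' x (n + 1) = oocfA (oocfT^[n] x) * oocfP x n - oocfP' x n := rfl

lemma oocfQ'_succ : oocfQ' x (n + 1) = oocfA (oocfT^[n] x) * oocfQ x n - oocfQ' x n := rfl

lemma oocfP_succ : oocfP x (n + 1) = 2 * oocfP' x (n + 1) + oocfE (oocfT^[n] x) * oocfP x n :=
  rfl

lemma oocfQ_succ : oocfQ x (n + 1) = 2 * oocfQ' x (n + 1) + oocfE (oocfT^[n] x) * oocfQ x n :=
  rfl

lemma oocfP''_succ : oocfP'' x (n + 1) = oocfP' x (n + 1) + oocfE (oocfT^[n] x) * oocfP x n :=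
  rfl

lemma oocfQ''_succ : oocfQ'' x (n + 1) = oocfQ' x (n + 1) + oocfE (oocfT^[n] x) * oocfQ x n :=
  rfl

end Recurrences

section Parity

variable (x : ℝ)

lemma odd_oocfP (n : ℕ) : Odd (oocfP x n) := by
  induction n with
  | zero => exact odd_one
  | succ n ih => rw [oocfP_succ]; exact (even_two_mul _).add_odd ((odd_oocfE _).mul ih)

lemma odd_oocfQ (n : ℕ) : Odd (oocfQ x n) := by
  induction n with
  | zero => exact odd_one
  | succ n ih => rw [oocfQ_succ]; exact (even_two_mul _).add_odd ((odd_oocfE _).mul ih)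

lemma odd_oocfP'_add_oocfQ' (n : ℕ) : Odd (oocfP' x n + oocfQ' x n) := by
  induction n with
  | zero => exact odd_one
  | succ n ih =>
    have h : oocfP' x (n + 1) + oocfQ' x (n + 1) =
        oocfA (oocfT^[n] x) * (oocfP x n + oocfQ x n) - (oocfP' x n + oocfQ' x n) := by
      rw [oocfP'_succ, oocfQ'_succ]; ring
    rw [h]
    exact (((odd_oocfP x n).add_odd (odd_oocfQ x n)).mul_left _).sub_odd ih

lemma odd_oocfP''_add_oocfQ''_succ (n : ℕ) : Odd (oocfP'' x (n + 1) + oocfQ'' x (n + 1)) := by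
  have h : oocfP'' x (n + 1) + oocfQ'' x (n + 1) =
      (oocfP' x (n + 1) + oocfQ' x (n + 1)) + oocfE (oocfT^[n] x) * (oocfP x n + oocfQ x n) := by
    rw [oocfP''_succ, oocfQ''_succ]; ring
  rw [h]
  exact (odd_oocfP'_add_oocfQ' x (n + 1)).add_even
    (((odd_oocfP x n).add_odd (odd_oocfQ x n)).mul_left _)

end Parity

section Coprimality

variable (x : ℝ)

lemma oocf_det_succ (n : ℕ) :
    oocfP x (n + 1) * oocfQ' x (n + 1) - oocfP' x (n + 1) * oocfQ x (n + 1) =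
      -oocfE (oocfT^[n] x) * (oocfP x n * oocfQ' x n - oocfP' x n * oocfQ x n) := by
  rw [oocfP_succ, oocfQ_succ, oocfP'_succ, oocfQ'_succ]
  ring

lemma isUnit_oocf_det (n : ℕ) : IsUnit (oocfP x n * oocfQ' x n - oocfP' x n * oocfQ x n) := by
  induction n with
  | zero => exact isUnit_one.neg
  | succ n ih => rw [oocf_det_succ]; exact (isUnit_oocfE _).neg.mul ih

lemma isCoprime_oocfP_oocfQ (n : ℕ) : IsCoprime (oocfP x n) (oocfQ x n) := by
  obtain ⟨u, hu⟩ := isUnit_iff_exists_inv'.1 (isUnit_oocf_det x n)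
  exact ⟨u * oocfQ' x n, -(u * oocfP' x n), by linear_combination hu⟩

end Coprimality

theorem oocf_convergents_parity_general
    (x : ℝ) :
    (∀ n : ℕ, Odd (oocfP x n) ∧ Odd (oocfQ x n) ∧ IsCoprime (oocfP x n) (oocfQ x n)) ∧
      (∀ n : ℕ, 1 ≤ n →
        Odd (oocfP' x n + oocfQ' x n) ∧ Odd (oocfP'' x n + oocfQ'' x n)) := by
  refine ⟨fun n => ⟨odd_oocfP x n, odd_oocfQ x n, isCoprime_oocfP_oocfQ x n⟩, ?_⟩
  rintro (_ | n) hn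
  · exact absurd hn (by norm_num)
  · exact ⟨odd_oocfP'_add_oocfQ' x (n + 1), odd_oocfP''_add_oocfQ''_succ x n⟩

/-- For irrational `x ∈ (0,1)`: all principal convergents `p_n/q_n` are odd/odd and in
lowest terms, while the sub-convergents `p'_n/q'_n` and pseudo-convergents `p''_n/q''_n`
(`n ≥ 1`) have numerator and denominator of opposite parity. -/
theorem oocf_convergents_parity
    (x : ℝ) (hx : x ∈ Set.Ioo (0 : ℝ) 1) (hirr : Irrational x) :
    (∀ n : ℕ, Odd (oocfP x n) ∧ Odd (oocfQ x n) ∧ IsCoprime (oocfP x n) (oocfQ x n)) ∧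
      (∀ n : ℕ, 1 ≤ n →
        Odd (oocfP' x n + oocfQ' x n) ∧ Odd (oocfP'' x n + oocfQ'' x n)) :=
  oocf_convergents_parity_general x
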